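/- In any preference model, if φ ⤳ ψ and χ ⤳ ψ both hold, then (φ ∨ χ) ⤳ ψ holds. (Validity of OR.) -/

import Mathlib

/-- ⪰-maximal elements of X: u ∈ X such that any v ∈ X with v ⪰ u satisfies u ⪰ v. -/
def most {S : Type*} (r : S → S → Prop) (X : Set S) : Set S :=
  {u ∈ X | ∀ v ∈ X, r v u → r u v}

/-- Support: φ ⤳ ψ holds iff most(||φ||) ⊆ ||ψ||. -/
def supp {S : Type*} (r : S → S → Prop) (X Y : Set S) : Prop :=
  most r X ⊆ Y

/-- Limitedness: nonempty truth sets have ⪰-maximal elements. -/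
def limited {S : Type*} (r : S → S → Prop) : Prop :=
  ∀ X : Set S, X.Nonempty → (most r X).Nonempty

theorem most_inter_subset_most {S : Type*} (r : S → S → Prop) {X Y : Set S} (hXY : X ⊆ Y) :
    most r Y ∩ X ⊆ most r X :=
  fun _ ⟨⟨_, hmax⟩, hX⟩ => ⟨hX, fun v hv => hmax v (hXY hv)⟩

/-- validity of OR. -/
theorem stmt7 {S : Type*} (r : S → S → Prop) (A B C : Set S)
    (h1 : supp r A B) (h2 : supp r C B) : supp r (A ∪ C) B := by
  intro u hu
  rcases hu.1 with hA | hC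
  · exact h1 (most_inter_subset_most r Set.subset_union_left ⟨hu, hA⟩)
  · exact h2 (most_inter_subset_most r Set.subset_union_right ⟨hu, hC⟩)
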